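/- arXiv:2504.09850 — 5 statements merged into one kernel-verified Lean document; each statement's English description precedes it below -/
import Mathlib

section
/- For every real number λ with |λ| ≤ 1/4, one has exp(−λ) / √(1 − 2λ) ≤ exp(2λ²). -/
/-! Taking logarithms, the inequality reads `-2λ - (2λ)² ≤ log (1 - 2λ)`. The function
`F y = log (1 - y) + y + y²` vanishes at `0` and has derivative `y (1 - 2y) / (1 - y)`, which has
the sign of `y` on `y ≤ 1/2`; so `0` is the minimum of `F` on `(-∞, 1/2]`. -/

open Real Set

theorem hasDerivAt_log_one_sub_add_add_sq {y : ℝ} (hy : y ≠ 1) :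
    HasDerivAt (fun y ↦ log (1 - y) + y + y ^ 2) (y * (1 - 2 * y) / (1 - y)) y := by
  have hy' : 1 - y ≠ 0 := sub_ne_zero.2 hy.symm
  refine ((((hasDerivAt_id y).const_sub 1).log hy').add (hasDerivAt_id y)).add
    (hasDerivAt_pow 2 y) |>.congr_deriv ?_
  simp only [id_eq]
  field_simp
  ring

theorem neg_sub_sq_le_log_one_sub {x : ℝ} (hx : x ≤ 1 / 2) : -x - x ^ 2 ≤ log (1 - x) := by
  set F : ℝ → ℝ := fun y ↦ log (1 - y) + y + y ^ 2
  suffices F 0 ≤ F x by simp only [F, sub_zero, log_one] at this; linarith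
  have hderiv {y : ℝ} (hy : y ≤ 1 / 2) : HasDerivAt F (y * (1 - 2 * y) / (1 - y)) y :=
    hasDerivAt_log_one_sub_add_add_sq (by linarith)
  rcases le_total 0 x with h0 | h0
  · refine monotoneOn_of_hasDerivWithinAt_nonneg (convex_Icc 0 x)
      (fun y hy ↦ (hderiv (hy.2.trans hx)).continuousAt.continuousWithinAt)
      (fun y hy ↦ (hderiv ((interior_subset hy).2.trans hx)).hasDerivWithinAt)
      (fun y hy ↦ ?_) ⟨le_rfl, h0⟩ ⟨h0, le_rfl⟩ h0
    rw [interior_Icc] at hy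
    exact div_nonneg (mul_nonneg hy.1.le (by linarith [hy.2])) (by linarith [hy.2])
  · refine antitoneOn_of_hasDerivWithinAt_nonpos (convex_Icc x 0)
      (fun y hy ↦ (hderiv (by linarith [hy.2])).continuousAt.continuousWithinAt)
      (fun y hy ↦ (hderiv (by linarith [(interior_subset hy).2])).hasDerivWithinAt)
      (fun y hy ↦ ?_) ⟨le_rfl, h0⟩ ⟨h0, le_rfl⟩ h0
    rw [interior_Icc] at hy
    exact div_nonpos_of_nonpos_of_nonneg (mul_nonpos_of_nonpos_of_nonneg hy.2.le
      (by linarith [hy.2])) (by linarith [hy.2])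

/-- Scalar analytic inequality behind the chi-squared MGF bound: for `|λ| ≤ 1/4`,
`exp(-λ) / √(1 - 2λ) ≤ exp(2λ²)`. -/
theorem exp_div_sqrt_le_exp_sq (l : ℝ) (hl : |l| ≤ 1 / 4) :
    Real.exp (-l) / Real.sqrt (1 - 2 * l) ≤ Real.exp (2 * l ^ 2) := by
  have hpos : 0 < 1 - 2 * l := by linarith [le_abs_self l]
  have hlog : -(2 * l) - (2 * l) ^ 2 ≤ log (1 - 2 * l) :=
    neg_sub_sq_le_log_one_sub (by linarith [le_abs_self l])
  rw [← exp_log hpos, ← exp_half, ← exp_sub, exp_le_exp]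
  linarith
end

section
/- Let x₁, …, xₙ be independent random vectors in ℝ^d (n ≥ 1) with E[x_i] = 0 for each i, and assume ‖x_i‖ ≤ R almost surely for each i, where R > 0 and ‖·‖ is the Euclidean norm. Then for every q ∈ [0, √n], P( ‖(1/n)·Σ_{i=1}^n x_i‖ ≥ R(1 + q)/√n ) ≤ exp(−q²/4). -/
/-!
Truncating each summand to the closed ball of radius `R` changes nothing almost surely, and turns
`‖∑ i, x i‖` into a function of the independent summands that moves by at most `2R` when a single
summand is changed. McDiarmid's inequality, proved by splitting off one coordinate of the product
measure at a time and applying Hoeffding's lemma to the fluctuation in that coordinate, makes it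
sub-Gaussian about its mean with variance proxy `n R²`. Independent centred vectors are orthogonal
in `L²`, so the mean is at most `√(E ‖∑ i, x i‖²) = √(∑ i, E ‖x i‖²) ≤ R √n`. The Chernoff bound at
deviation `R q √n` then gives `exp (-q² / 2) ≤ exp (-q² / 4)`.
-/

open MeasureTheory ProbabilityTheory
open scoped NNReal ENNReal RealInnerProductSpace

lemma exists_forall_mem_Icc_of_abs_sub_le {α : Type*} [Nonempty α] {g : α → ℝ} {c : ℝ}
    (h : ∀ a b, |g a - g b| ≤ c) : ∃ l, ∀ a, g a ∈ Set.Icc l (l + c) := by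
  obtain ⟨a₀⟩ := ‹Nonempty α›
  have hbdd : BddBelow (Set.range g) :=
    ⟨g a₀ - c, by rintro _ ⟨b, rfl⟩; linarith [(abs_le.1 (h a₀ b)).2]⟩
  refine ⟨⨅ a, g a, fun a ↦ ⟨ciInf_le hbdd a, ?_⟩⟩
  have : g a - c ≤ ⨅ b, g b := le_ciInf fun b ↦ by linarith [(abs_le.1 (h a b)).2]
  linarith

lemma abs_sub_le_sum_of_abs_update_sub_le {ι : Type*} [Fintype ι] [DecidableEq ι]
    {X : ι → Type*} {f : (∀ i, X i) → ℝ} {c : ι → ℝ}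
    (hf : ∀ z i b, |f (Function.update z i b) - f z| ≤ c i) (z z' : ∀ i, X i) :
    |f z' - f z| ≤ ∑ i, c i := by
  suffices ∀ s : Finset ι, |f (s.piecewise z' z) - f z| ≤ ∑ i ∈ s, c i by
    simpa using this Finset.univ
  intro s
  induction s using Finset.induction_on with
  | empty => simp
  | insert i s hi ih =>
    rw [Finset.piecewise_insert, Finset.sum_insert hi]
    calc _ ≤ |f (Function.update (s.piecewise z' z) i (z' i)) - f (s.piecewise z' z)|
          + |f (s.piecewise z' z) - f z| := abs_sub_le _ _ _
      _ ≤ c i + ∑ i ∈ s, c i := add_le_add (hf _ _ _) ih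

lemma abs_norm_sum_update_sub_le {ι E F : Type*} [Fintype ι] [DecidableEq ι]
    [SeminormedAddCommGroup F] {g : E → F} {r : ℝ} (hg : ∀ v, ‖g v‖ ≤ r) (z : ι → E) (i : ι)
    (b : E) : |‖∑ j, g (Function.update z i b j)‖ - ‖∑ j, g (z j)‖| ≤ 2 * r := calc
  _ ≤ ‖∑ j, g (Function.update z i b j) - ∑ j, g (z j)‖ := abs_norm_sub_norm_le _ _
  _ = ‖g b - g (z i)‖ := by
    rw [← Finset.sum_sub_distrib, Finset.sum_eq_single i (fun j _ hj ↦ by simp [hj]) (by simp)]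
    simp
  _ ≤ 2 * r := (norm_sub_le _ _).trans (by linarith [hg b, hg (z i)])

lemma integrable_of_abs_sub_le {α : Type*} [MeasurableSpace α] {μ : Measure α}
    [IsFiniteMeasure μ] {g : α → ℝ} {C : ℝ} (hg : AEMeasurable g μ)
    (h : ∀ a b, |g a - g b| ≤ C) : Integrable g μ := by
  rcases isEmpty_or_nonempty α with _ | _
  · exact .of_isEmpty
  obtain ⟨l, hl⟩ := exists_forall_mem_Icc_of_abs_sub_le h
  exact .of_mem_Icc l (l + C) hg (ae_of_all _ hl)

lemma norm_indicator_closedBall_le {E : Type*} [SeminormedAddCommGroup E] {R : ℝ} (hR : 0 ≤ R)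
    (v : E) : ‖(Metric.closedBall (0 : E) R).indicator id v‖ ≤ R := by
  by_cases hv : v ∈ Metric.closedBall (0 : E) R
  · simpa [Set.indicator_of_mem hv] using hv
  · simp [Set.indicator_of_notMem hv, hR]

namespace ProbabilityTheory

section McDiarmid

variable {α β : Type*} {mα : MeasurableSpace α} {mβ : MeasurableSpace β}

lemma HasSubgaussianMGF.lintegral_exp_mul_le {X : α → ℝ} {c : ℝ≥0} {μ : Measure α}
    (h : HasSubgaussianMGF X c μ) (t : ℝ) :
    ∫⁻ a, ENNReal.ofReal (Real.exp (t * X a)) ∂μ ≤ ENNReal.ofReal (Real.exp (c * t ^ 2 / 2)) := by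
  rw [← ofReal_integral_eq_lintegral_ofReal (h.integrable_exp_mul t)
    (ae_of_all _ fun _ ↦ (Real.exp_pos _).le)]
  exact ENNReal.ofReal_le_ofReal (h.mgf_le t)

lemma HasSubgaussianMGF.prod_of_forall_sub {μ : Measure α} {ν : Measure β} [SFinite μ]
    [SFinite ν] {F : α × β → ℝ} {G : β → ℝ} {c₁ c₂ : ℝ≥0} (hF : Measurable F)
    (hFG : ∀ y, HasSubgaussianMGF (fun a ↦ F (a, y) - G y) c₁ μ)
    (hG : HasSubgaussianMGF G c₂ ν) :
    HasSubgaussianMGF F (c₁ + c₂) (μ.prod ν) := by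
  have hmeas (t : ℝ) : Measurable fun p ↦ Real.exp (t * F p) := by fun_prop
  -- Tonelli needs no integrability, and the finiteness of the bound then provides it.
  have hlintegral (t : ℝ) : ∫⁻ p, ENNReal.ofReal (Real.exp (t * F p)) ∂μ.prod ν
      ≤ ENNReal.ofReal (Real.exp ((c₁ + c₂ : ℝ≥0) * t ^ 2 / 2)) := calc
    _ = ∫⁻ y, ENNReal.ofReal (Real.exp (t * G y)) *
          ∫⁻ a, ENNReal.ofReal (Real.exp (t * (F (a, y) - G y))) ∂μ ∂ν := by
      rw [lintegral_prod_symm _ (hmeas t).ennreal_ofReal.aemeasurable]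
      refine lintegral_congr fun y ↦ ?_
      rw [← lintegral_const_mul' _ _ ENNReal.ofReal_ne_top]
      refine lintegral_congr fun a ↦ ?_
      rw [← ENNReal.ofReal_mul (Real.exp_pos _).le, ← Real.exp_add]
      ring_nf
    _ ≤ ∫⁻ y, ENNReal.ofReal (Real.exp (t * G y)) *
          ENNReal.ofReal (Real.exp (c₁ * t ^ 2 / 2)) ∂ν := by
      gcongr with y
      exact (hFG y).lintegral_exp_mul_le t
    _ ≤ ENNReal.ofReal (Real.exp (c₂ * t ^ 2 / 2)) *
          ENNReal.ofReal (Real.exp (c₁ * t ^ 2 / 2)) := by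
      rw [lintegral_mul_const' _ _ ENNReal.ofReal_ne_top]
      gcongr
      exact hG.lintegral_exp_mul_le t
    _ = _ := by
      rw [← ENNReal.ofReal_mul (Real.exp_pos _).le, ← Real.exp_add]
      congr 2
      push_cast
      ring
  have hnonneg (t : ℝ) : 0 ≤ᵐ[μ.prod ν] fun p ↦ Real.exp (t * F p) :=
    ae_of_all _ fun _ ↦ (Real.exp_pos _).le
  refine ⟨fun t ↦ ⟨(hmeas t).aestronglyMeasurable, ?_⟩, fun t ↦ ?_⟩
  · exact (hasFiniteIntegral_iff_ofReal (hnonneg t)).2 ((hlintegral t).trans_lt ENNReal.ofReal_lt_top)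
  · rw [mgf, integral_eq_lintegral_of_nonneg_ae (hnonneg t) (hmeas t).aestronglyMeasurable]
    exact ENNReal.toReal_le_of_le_ofReal (Real.exp_pos _).le (hlintegral t)

lemma hasSubgaussianMGF_sub_integral_of_abs_sub_le {μ : Measure α} [IsProbabilityMeasure μ]
    {g : α → ℝ} {c : ℝ≥0} (hg : AEMeasurable g μ) (h : ∀ a b, |g a - g b| ≤ c) :
    HasSubgaussianMGF (fun a ↦ g a - ∫ a', g a' ∂μ) ((c / 2) ^ 2) μ := by
  have : Nonempty α := nonempty_of_isProbabilityMeasure μ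
  obtain ⟨l, hl⟩ := exists_forall_mem_Icc_of_abs_sub_le h
  simpa using hasSubgaussianMGF_of_mem_Icc hg (ae_of_all μ hl)

universe u

/-- McDiarmid's bounded-differences inequality, in sub-Gaussian form. -/
theorem hasSubgaussianMGF_sub_integral_of_abs_update_sub_le {n : ℕ} {X : Fin n → Type u}
    [∀ i, MeasurableSpace (X i)] (μ : ∀ i, Measure (X i)) [∀ i, IsProbabilityMeasure (μ i)]
    {f : (∀ i, X i) → ℝ} (c : Fin n → ℝ≥0) (hf : Measurable f)
    (hfc : ∀ z i b, |f (Function.update z i b) - f z| ≤ c i) :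
    HasSubgaussianMGF (fun z ↦ f z - ∫ z', f z' ∂Measure.pi μ) (∑ i, (c i / 2) ^ 2)
      (Measure.pi μ) := by
  induction n with
  | zero =>
    have hconst (z) : f z - ∫ z', f z' ∂Measure.pi μ = 0 := by simp [Subsingleton.elim _ z]
    simp [hconst, HasSubgaussianMGF.fun_zero]
  | succ n ih =>
    set e := MeasurableEquiv.piFinSuccAbove X 0
    set ν := Measure.pi fun j ↦ μ (Fin.succAbove 0 j)
    have he : MeasurePreserving e (Measure.pi μ) ((μ 0).prod ν) :=
      measurePreserving_piFinSuccAbove μ 0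
    set F : X 0 × (∀ j, X (Fin.succAbove 0 j)) → ℝ := fun p ↦ f (Fin.insertNth 0 p.1 p.2)
    have hF : Measurable F := hf.comp e.symm.measurable
    have hbdd (p p') : |F p - F p'| ≤ ∑ i, (c i : ℝ) :=
      abs_sub_le_sum_of_abs_update_sub_le hfc _ _
    have hsection (y) : Integrable (fun a ↦ F (a, y)) (μ 0) :=
      integrable_of_abs_sub_le (by fun_prop) fun _ _ ↦ hbdd _ _
    set g := fun y ↦ ∫ a, F (a, y) ∂μ 0
    have hg_diff (y j b) : |g (Function.update y j b) - g y| ≤ c (Fin.succAbove 0 j) := by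
      rw [← integral_sub (hsection _) (hsection _), ← Real.norm_eq_abs]
      refine (norm_integral_le_of_norm_le_const (C := c (Fin.succAbove 0 j))
        (ae_of_all _ fun a ↦ ?_)).trans_eq (by simp)
      simpa only [F, Fin.insertNth_update, Real.norm_eq_abs] using hfc _ _ b
    have hrest := ih (fun j ↦ μ (Fin.succAbove 0 j)) (fun j ↦ c (Fin.succAbove 0 j))
      hF.stronglyMeasurable.integral_prod_left'.measurable hg_diff
    have hfiber (y) : HasSubgaussianMGF (fun a ↦ F (a, y) - g y) ((c 0 / 2) ^ 2) (μ 0) :=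
      hasSubgaussianMGF_sub_integral_of_abs_sub_le (by fun_prop) fun a a' ↦ by
        simpa only [F, Fin.update_insertNth] using hfc (Fin.insertNth 0 a' y) 0 a
    have hprod := HasSubgaussianMGF.prod_of_forall_sub (hF.sub_const (∫ y, g y ∂ν))
      (fun y ↦ (hfiber y).congr (ae_of_all _ fun _ ↦ (sub_sub_sub_cancel_right _ _ _).symm)) hrest
    have hmean : ∫ z, f z ∂Measure.pi μ = ∫ y, g y ∂ν := calc
      _ = ∫ p, F p ∂(μ 0).prod ν := ((he.symm _).integral_comp' f).symm
      _ = ∫ y, g y ∂ν :=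
        integral_prod_symm _ (integrable_of_abs_sub_le hF.aemeasurable fun _ _ ↦ hbdd _ _)
    rw [← he.map_eq] at hprod
    rw [Fin.sum_univ_succAbove _ 0]
    convert hprod.of_map e.measurable.aemeasurable using 1
    ext z
    rw [hmean]
    exact congrArg (f · - ∫ y, g y ∂ν) (e.symm_apply_apply z).symm

end McDiarmid

variable {Ω E : Type*} {mΩ : MeasurableSpace Ω} {μ : Measure Ω} [IsProbabilityMeasure μ]
  [NormedAddCommGroup E] [InnerProductSpace ℝ E] [CompleteSpace E] [MeasurableSpace E]
  [BorelSpace E] [SecondCountableTopology E]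

lemma IndepFun.integral_inner {X Y : Ω → E} (hXY : IndepFun X Y μ) (hX : Integrable X μ)
    (hY : Integrable Y μ) : ∫ ω, ⟪X ω, Y ω⟫ ∂μ = ⟪∫ ω, X ω ∂μ, ∫ ω, Y ω ∂μ⟫ := by
  have hX' : Integrable (fun a ↦ a) (μ.map X) :=
    (integrable_map_measure (by fun_prop) hX.aemeasurable).2 hX
  have hY' : Integrable (fun b ↦ b) (μ.map Y) :=
    (integrable_map_measure (by fun_prop) hY.aemeasurable).2 hY
  have hprod : μ.map (fun ω ↦ (X ω, Y ω)) = (μ.map X).prod (μ.map Y) :=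
    (indepFun_iff_map_prod_eq_prod_map_map hX.aemeasurable hY.aemeasurable).1 hXY
  have hint : Integrable (fun p : E × E ↦ ⟪p.1, p.2⟫) ((μ.map X).prod (μ.map Y)) :=
    (hX'.norm.mul_prod hY'.norm).mono' (continuous_fst.inner continuous_snd).aestronglyMeasurable
      (ae_of_all _ fun p ↦ by simpa using norm_inner_le_norm (𝕜 := ℝ) p.1 p.2)
  calc ∫ ω, ⟪X ω, Y ω⟫ ∂μ = ∫ p : E × E, ⟪p.1, p.2⟫ ∂μ.map (fun ω ↦ (X ω, Y ω)) :=
        (integral_map (f := fun p : E × E ↦ ⟪p.1, p.2⟫) (hX.aemeasurable.prodMk hY.aemeasurable)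
          (continuous_fst.inner continuous_snd).aestronglyMeasurable).symm
    _ = ∫ a, ⟪∫ b, b ∂μ.map Y, a⟫ ∂μ.map X := by
        rw [hprod, integral_prod _ hint]
        refine integral_congr_ae (ae_of_all _ fun a ↦ ?_)
        exact (_root_.integral_inner hY' a).trans (real_inner_comm _ _)
    _ = ⟪∫ ω, X ω ∂μ, ∫ ω, Y ω ∂μ⟫ := by
        rw [_root_.integral_inner hX', real_inner_comm,
          integral_map (f := fun b ↦ b) hY.aemeasurable aestronglyMeasurable_id,
          integral_map (f := fun a ↦ a) hX.aemeasurable aestronglyMeasurable_id]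

lemma integral_norm_sum_sq_of_iIndepFun {ι : Type*} {X : ι → Ω → E} (hX : ∀ i, MemLp (X i) 2 μ)
    (hindep : iIndepFun X μ) (hmean : ∀ i, ∫ ω, X i ω ∂μ = 0) (s : Finset ι) :
    ∫ ω, ‖∑ i ∈ s, X i ω‖ ^ 2 ∂μ = ∑ i ∈ s, ∫ ω, ‖X i ω‖ ^ 2 ∂μ := by
  classical
  induction s using Finset.induction_on with
  | empty => simp
  | insert i s hi ih =>
    have hS : MemLp (fun ω ↦ ∑ j ∈ s, X j ω) 2 μ := memLp_finsetSum s fun j _ ↦ hX j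
    have hindep' : IndepFun (X i) (fun ω ↦ ∑ j ∈ s, X j ω) μ := by
      simpa only [Finset.sum_fn] using (hindep.indepFun_finsetSum_of_notMem₀
        (fun j ↦ (hX j).aestronglyMeasurable.aemeasurable) hi).symm
    have hinner : ∫ ω, ⟪X i ω, ∑ j ∈ s, X j ω⟫ ∂μ = 0 := by
      rw [hindep'.integral_inner ((hX i).integrable one_le_two) (hS.integrable one_le_two), hmean,
        inner_zero_left]
    have hint_inner : Integrable (fun ω ↦ ⟪X i ω, ∑ j ∈ s, X j ω⟫) μ := by
      refine ((hX i).norm.integrable_mul hS.norm).mono' ((hX i).1.inner hS.1)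
        (ae_of_all _ fun ω ↦ ?_)
      simpa using norm_inner_le_norm (𝕜 := ℝ) (X i ω) (∑ j ∈ s, X j ω)
    have hXi_sq := (hX i).integrable_norm_pow two_ne_zero
    have hfirst : Integrable (fun ω ↦ ‖X i ω‖ ^ 2 + 2 * ⟪X i ω, ∑ j ∈ s, X j ω⟫) μ :=
      hXi_sq.add (hint_inner.const_mul 2)
    simp_rw [Finset.sum_insert hi, norm_add_sq_real]
    rw [integral_add hfirst (hS.integrable_norm_pow two_ne_zero),
      integral_add hXi_sq (hint_inner.const_mul 2), integral_const_mul, hinner, ih]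
    ring

lemma integral_norm_sum_le_of_iIndepFun {ι : Type*} {X : ι → Ω → E} {R : ℝ} (hR : 0 ≤ R)
    (hX : ∀ i, AEStronglyMeasurable (X i) μ) (hbdd : ∀ i, ∀ᵐ ω ∂μ, ‖X i ω‖ ≤ R)
    (hindep : iIndepFun X μ) (hmean : ∀ i, ∫ ω, X i ω ∂μ = 0) (s : Finset ι) :
    ∫ ω, ‖∑ i ∈ s, X i ω‖ ∂μ ≤ R * √s.card := by
  have hL2 (i) : MemLp (X i) 2 μ := .of_bound (hX i) R (hbdd i)
  have hS : MemLp (fun ω ↦ ‖∑ i ∈ s, X i ω‖) 2 μ := (memLp_finsetSum s fun i _ ↦ hL2 i).norm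
  have hsq_le (i) : ∫ ω, ‖X i ω‖ ^ 2 ∂μ ≤ R ^ 2 := by
    refine (integral_mono_ae ((hL2 i).integrable_norm_pow two_ne_zero)
      (integrable_const (R ^ 2)) ?_).trans_eq (by simp)
    filter_upwards [hbdd i] with ω hω
    gcongr
  have hsecond : ∫ ω, ‖∑ i ∈ s, X i ω‖ ^ 2 ∂μ ≤ s.card * R ^ 2 := by
    rw [integral_norm_sum_sq_of_iIndepFun hL2 hindep hmean s]
    simpa using Finset.sum_le_sum fun i (_ : i ∈ s) ↦ hsq_le i
  have hjensen := variance_nonneg (fun ω ↦ ‖∑ i ∈ s, X i ω‖) μ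
  rw [variance_eq_sub hS] at hjensen
  calc ∫ ω, ‖∑ i ∈ s, X i ω‖ ∂μ ≤ √(s.card * R ^ 2) := by
        refine Real.le_sqrt_of_sq_le ?_
        simp only [Pi.pow_apply] at hjensen
        linarith
    _ = R * √s.card := by rw [Real.sqrt_mul (Nat.cast_nonneg _), Real.sqrt_sq hR, mul_comm]

theorem measure_norm_sum_ge_le_of_iIndepFun {n : ℕ} {R : ℝ} (hR : 0 ≤ R)
    {x : Fin n → Ω → E} (hmeas : ∀ i, Measurable (x i)) (hindep : iIndepFun x μ)
    (hmean : ∀ i, ∫ ω, x i ω ∂μ = 0) (hbdd : ∀ i, ∀ᵐ ω ∂μ, ‖x i ω‖ ≤ R) {ε : ℝ} (hε : 0 ≤ ε) :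
    μ {ω | R * √n + ε ≤ ‖∑ i, x i ω‖} ≤ ENNReal.ofReal (Real.exp (-ε ^ 2 / (2 * (n * R ^ 2)))) := by
  set trunc : E → E := (Metric.closedBall (0 : E) R).indicator id
  have htrunc_meas : Measurable trunc :=
    measurable_id.indicator Metric.isClosed_closedBall.measurableSet
  set f : (Fin n → E) → ℝ := fun z ↦ ‖∑ i, trunc (z i)‖
  have hf : Measurable f := by fun_prop
  set m := ∫ z, f z ∂μ.map (fun ω i ↦ x i ω) with hm_def
  have : ∀ i, IsProbabilityMeasure (μ.map (x i)) := fun i ↦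
    Measure.isProbabilityMeasure_map (hmeas i).aemeasurable
  have hlaw : μ.map (fun ω i ↦ x i ω) = Measure.pi fun i ↦ μ.map (x i) :=
    (iIndepFun_iff_map_fun_eq_pi_map fun i ↦ (hmeas i).aemeasurable).1 hindep
  have hsubG : HasSubgaussianMGF (fun z ↦ f z - m) (∑ _i : Fin n, (2 * R.toNNReal / 2) ^ 2)
      (μ.map (fun ω i ↦ x i ω)) := by
    rw [hm_def, hlaw]
    refine hasSubgaussianMGF_sub_integral_of_abs_update_sub_le _ _ hf fun z i b ↦ ?_
    simpa [Real.coe_toNNReal _ hR] using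
      abs_norm_sum_update_sub_le (norm_indicator_closedBall_le hR) z i b
  have hfx : ∀ᵐ ω ∂μ, f (fun i ↦ x i ω) = ‖∑ i, x i ω‖ := by
    filter_upwards [ae_all_iff.2 hbdd] with ω hω
    simp only [f, trunc]
    congr 1
    exact Finset.sum_congr rfl fun i _ ↦ Set.indicator_of_mem (mem_closedBall_zero_iff.2 (hω i)) _
  have hm : m ≤ R * √n := calc
    m = ∫ ω, ‖∑ i, x i ω‖ ∂μ := by
      rw [hm_def, integral_map (by fun_prop) hf.aestronglyMeasurable]
      exact integral_congr_ae hfx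
    _ ≤ R * √n := by
      simpa using integral_norm_sum_le_of_iIndepFun hR (fun i ↦ (hmeas i).aestronglyMeasurable)
        hbdd hindep hmean Finset.univ
  have htail := (hsubG.of_map (by fun_prop)).measure_ge_le hε
  rw [show ((∑ _i : Fin n, (2 * R.toNNReal / 2) ^ 2 : ℝ≥0) : ℝ) = n * R ^ 2 by
    simp [Real.coe_toNNReal _ hR]] at htail
  refine le_trans (measure_mono_ae ?_) ((ofReal_measureReal).symm.trans_le
    (ENNReal.ofReal_le_ofReal htail))
  filter_upwards [hfx] with ω hω (hω' : R * √n + ε ≤ ‖∑ i, x i ω‖)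
  change ε ≤ f (fun i ↦ x i ω) - m
  linarith

end ProbabilityTheory

theorem vector_bernstein_general {Ω : Type*} [MeasurableSpace Ω] (P : Measure Ω)
    [IsProbabilityMeasure P] (d n : ℕ) (hn : 1 ≤ n) (R : ℝ) (hR : 0 < R)
    (x : Fin n → Ω → EuclideanSpace ℝ (Fin d))
    (hmeas : ∀ i, Measurable (x i))
    (hindep : iIndepFun x P)
    (hmean : ∀ i, ∫ ω, x i ω ∂P = 0)
    (hbdd : ∀ i, ∀ᵐ ω ∂P, ‖x i ω‖ ≤ R)
    (q : ℝ) (hq0 : 0 ≤ q) :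
    P {ω | R * (1 + q) / Real.sqrt n ≤ ‖(n : ℝ)⁻¹ • ∑ i, x i ω‖} ≤
      ENNReal.ofReal (Real.exp (-q ^ 2 / 4)) := by
  have hn' : (0 : ℝ) < n := by exact_mod_cast hn
  have hthreshold : R * (1 + q) / √n = (n : ℝ)⁻¹ * (R * √n + R * q * √n) := by
    rw [eq_inv_mul_iff_mul_eq₀ hn'.ne']
    field_simp
    rw [Real.sq_sqrt hn'.le]
  have hevent : {ω | R * (1 + q) / √n ≤ ‖(n : ℝ)⁻¹ • ∑ i, x i ω‖}
      ⊆ {ω | R * √n + R * q * √n ≤ ‖∑ i, x i ω‖} := fun ω hω ↦ by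
    rw [Set.mem_ofPred_eq, norm_smul, norm_inv, Real.norm_natCast, hthreshold] at hω
    exact le_of_mul_le_mul_left hω (inv_pos.2 hn')
  have hexponent : -(R * q * √n) ^ 2 / (2 * (n * R ^ 2)) = -q ^ 2 / 2 := by
    rw [mul_pow, Real.sq_sqrt hn'.le]
    field_simp
  calc _ ≤ _ := measure_mono hevent
    _ ≤ _ := measure_norm_sum_ge_le_of_iIndepFun hR.le hmeas hindep hmean hbdd (by positivity)
    _ ≤ _ := ENNReal.ofReal_le_ofReal (Real.exp_le_exp.2 (by linarith [hexponent, sq_nonneg q]))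

/-- Vector Bernstein inequality (Lemma A.3): if `x₁, …, xₙ` are independent mean-zero
random vectors in `ℝ^d` with `‖xᵢ‖ ≤ R` almost surely, then for every `q ∈ [0, √n]`,
`P(‖(1/n) Σ xᵢ‖ ≥ R(1+q)/√n) ≤ exp(-q²/4)`. -/
theorem vector_bernstein {Ω : Type*} [MeasurableSpace Ω] (P : Measure Ω)
    [IsProbabilityMeasure P] (d n : ℕ) (hn : 1 ≤ n) (R : ℝ) (hR : 0 < R)
    (x : Fin n → Ω → EuclideanSpace ℝ (Fin d))
    (hmeas : ∀ i, Measurable (x i))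
    (hindep : iIndepFun x P)
    (hmean : ∀ i, ∫ ω, x i ω ∂P = 0)
    (hbdd : ∀ i, ∀ᵐ ω ∂P, ‖x i ω‖ ≤ R)
    (q : ℝ) (hq0 : 0 ≤ q) (hqn : q ≤ Real.sqrt n) :
    P {ω | R * (1 + q) / Real.sqrt n ≤ ‖(n : ℝ)⁻¹ • ∑ i, x i ω‖} ≤
      ENNReal.ofReal (Real.exp (-q ^ 2 / 4)) :=
  vector_bernstein_general P d n hn R hR x hmeas hindep hmean hbdd q hq0
end

section
/- Let H be a real inner product space, let w, w* ∈ H, let M ≥ 1, let Δ₁, …, Δ_M ∈ H, let ε̄ ∈ H, and let α, η ∈ ℝ. Define Δ̄ = (1/M)·Σ_{i=1}^M Δ_i and c̄ = Δ̄ + ε̄. If the approximate projection condition (1/M)·Σ_{i=1}^M ‖w + Δ_i − w*‖² = (1 − α)·‖w − w*‖² holds, then ‖w + η·c̄ − w*‖² = (1 − α·η)·‖w − w*‖² − (η/M)·Σ_{i=1}^M ‖Δ_i‖² + η²·‖c̄‖² + 2η·⟨ε̄, w − w*⟩. -/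
/-!
Expanding the squares in the approximate projection condition pins down the cross term:
`2⟪w - w*, Δ̄⟫ = -α‖w - w*‖² - (1/M) Σ ‖Δᵢ‖²`. Substituting this into the expansion of
`‖(w - w*) + η c̄‖² = ‖w - w*‖² + 2η⟪w - w*, Δ̄ + ε̄⟫ + η²‖c̄‖²` gives the identity.
-/

open scoped RealInnerProductSpace

section

variable {H ι : Type*} [NormedAddCommGroup H] [InnerProductSpace ℝ H] [Fintype ι]

theorem sum_norm_add_sq_real (x : H) (Δ : ι → H) :
    ∑ i, ‖x + Δ i‖ ^ 2 = Fintype.card ι * ‖x‖ ^ 2 + 2 * ⟪x, ∑ i, Δ i⟫ + ∑ i, ‖Δ i‖ ^ 2 := by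
  simp only [norm_add_sq_real, Finset.sum_add_distrib, Finset.sum_const, Finset.card_univ,
    nsmul_eq_mul, inner_sum, Finset.mul_sum]

theorem inv_card_mul_sum_norm_add_sq_real [Nonempty ι] (x : H) (Δ : ι → H) :
    (Fintype.card ι : ℝ)⁻¹ * ∑ i, ‖x + Δ i‖ ^ 2 =
      ‖x‖ ^ 2 + 2 * ⟪x, (Fintype.card ι : ℝ)⁻¹ • ∑ i, Δ i⟫
        + (Fintype.card ι : ℝ)⁻¹ * ∑ i, ‖Δ i‖ ^ 2 := by
  have hcard : (Fintype.card ι : ℝ) ≠ 0 := by positivity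
  rw [sum_norm_add_sq_real, real_inner_smul_right]
  field_simp

theorem norm_add_smul_sq_real (x y : H) (η : ℝ) :
    ‖x + η • y‖ ^ 2 = ‖x‖ ^ 2 + 2 * η * ⟪x, y⟫ + η ^ 2 * ‖y‖ ^ 2 := by
  rw [norm_add_sq_real, norm_smul, real_inner_smul_right, mul_pow, Real.norm_eq_abs, sq_abs]
  ring

end

/-- Deterministic content of Lemma A.4: under the approximate projection condition,
with `Δ̄ = (1/M) Σ Δᵢ` and `c̄ = Δ̄ + ε̄`, the updated iterate satisfies
`‖w + η c̄ - w*‖² = (1 - αη) ‖w - w*‖² - (η/M) Σ ‖Δᵢ‖² + η² ‖c̄‖² + 2η ⟨ε̄, w - w*⟩`. -/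
theorem approx_projection_decrease {H : Type*} [NormedAddCommGroup H]
    [InnerProductSpace ℝ H] (M : ℕ) (hM : 1 ≤ M) (w wstar : H) (Δ : Fin M → H)
    (εbar : H) (α η : ℝ)
    (Δbar : H) (hΔbar : Δbar = (M : ℝ)⁻¹ • ∑ i, Δ i)
    (cbar : H) (hcbar : cbar = Δbar + εbar)
    (hproj : (1 / M : ℝ) * ∑ i, ‖w + Δ i - wstar‖ ^ 2 = (1 - α) * ‖w - wstar‖ ^ 2) :
    ‖w + η • cbar - wstar‖ ^ 2 =
      (1 - α * η) * ‖w - wstar‖ ^ 2 - (η / M) * ∑ i, ‖Δ i‖ ^ 2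
        + η ^ 2 * ‖cbar‖ ^ 2 + 2 * η * ⟪εbar, w - wstar⟫ := by
  have : Nonempty (Fin M) := ⟨⟨0, hM⟩⟩
  have hmean := inv_card_mul_sum_norm_add_sq_real (w - wstar) Δ
  simp only [Fintype.card_fin, sub_add_eq_add_sub] at hmean
  rw [← hΔbar, ← one_div, hproj] at hmean
  rw [add_sub_right_comm, norm_add_smul_sq_real, hcbar, inner_add_right,
    real_inner_comm εbar]
  linear_combination (-η) * hmean
end

section
/- Let F : ℝ^d → ℝ be differentiable with L-Lipschitz gradient (L-smooth), i.e., ‖∇F(x) − ∇F(y)‖ ≤ L‖x − y‖ for all x, y ∈ ℝ^d. Let w ∈ ℝ^d, let u ∈ ℝ^d with u ≠ 0, let γ > 0 and S ≥ 0, and set η = max{1, S/‖u‖²} and w' = w − γ·η·u. Then F(w') − F(w) ≤ −γ·η·( ⟨∇F(w), u⟩ − (γ·L/2)·max{S, ‖u‖²} ). -/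
/-!
Along the segment from `w` to `w + v`, the Lipschitz gradient makes
`t ↦ F (w + t • v) - t ⟪∇F w, v⟫ - (L/2) t² ‖v‖²` nonincreasing for `t ≥ 0`; comparing `t = 1`
with `t = 0` gives the descent lemma `F (w + v) ≤ F w + ⟪∇F w, v⟫ + (L/2) ‖v‖²`.
For `v = -(γη) u` the quadratic term is `(L/2) γ² η · η ‖u‖²`, and `η ‖u‖² = max S ‖u‖²`.
-/

open scoped RealInnerProductSpace

section Descent

variable {E : Type*} [NormedAddCommGroup E] [InnerProductSpace ℝ E] [CompleteSpace E]
  {F : E → ℝ} {L : ℝ}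

theorem hasDerivAt_comp_add_smul {w v : E} {t : ℝ} (hF : DifferentiableAt ℝ F (w + t • v)) :
    HasDerivAt (fun s : ℝ => F (w + s • v)) ⟪gradient F (w + t • v), v⟫ t := by
  have hline : HasDerivAt (fun s : ℝ => w + s • v) v t := by
    simpa using ((hasDerivAt_id t).smul_const v).const_add w
  simpa [Function.comp_def] using hF.hasGradientAt.hasFDerivAt.comp_hasDerivAt t hline

theorem inner_gradient_add_smul_sub_le
    (hlip : ∀ x y, ‖gradient F x - gradient F y‖ ≤ L * ‖x - y‖) (w v : E) {t : ℝ} (ht : 0 ≤ t) :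
    ⟪gradient F (w + t • v) - gradient F w, v⟫ ≤ L * t * ‖v‖ ^ 2 :=
  calc ⟪gradient F (w + t • v) - gradient F w, v⟫
      ≤ ‖gradient F (w + t • v) - gradient F w‖ * ‖v‖ := real_inner_le_norm _ _
    _ ≤ L * ‖w + t • v - w‖ * ‖v‖ := mul_le_mul_of_nonneg_right (hlip _ _) (norm_nonneg v)
    _ = L * t * ‖v‖ ^ 2 := by
      rw [add_sub_cancel_left, norm_smul, Real.norm_of_nonneg ht]
      ring

theorem image_add_le_of_lipschitz_gradient (hF : Differentiable ℝ F)
    (hlip : ∀ x y, ‖gradient F x - gradient F y‖ ≤ L * ‖x - y‖) (w v : E) :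
    F (w + v) ≤ F w + ⟪gradient F w, v⟫ + L / 2 * ‖v‖ ^ 2 := by
  set φ : ℝ → ℝ := fun t => F (w + t • v) - (t * ⟪gradient F w, v⟫ + L / 2 * t ^ 2 * ‖v‖ ^ 2)
  have hφ : ∀ t, HasDerivAt φ
      (⟪gradient F (w + t • v), v⟫ - (⟪gradient F w, v⟫ + L * t * ‖v‖ ^ 2)) t := by
    intro t
    refine ((hasDerivAt_comp_add_smul (hF (w + t • v))).sub
      (((hasDerivAt_id' t).mul_const ⟪gradient F w, v⟫).add
        (((hasDerivAt_pow 2 t).const_mul (L / 2)).mul_const (‖v‖ ^ 2)))).congr_deriv ?_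
    ring
  have hφ_anti : AntitoneOn φ (Set.Ici 0) := by
    refine antitoneOn_of_deriv_nonpos (convex_Ici 0)
      (fun t _ => (hφ t).continuousAt.continuousWithinAt)
      (fun t _ => (hφ t).differentiableAt.differentiableWithinAt) fun t ht => ?_
    rw [interior_Ici] at ht
    rw [(hφ t).deriv, sub_nonpos, ← sub_le_iff_le_add', ← inner_sub_left]
    exact inner_gradient_add_smul_sub_le hlip w v (le_of_lt ht)
  simpa [φ, add_assoc] using
    hφ_anti Set.self_mem_Ici (Set.mem_Ici.mpr zero_le_one) zero_le_one

end Descent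

theorem max_one_div_mul {a : ℝ} (ha : 0 < a) (S : ℝ) : max 1 (S / a) * a = max S a := by
  rw [max_mul_of_nonneg _ _ ha.le, one_mul, div_mul_cancel₀ _ ha.ne', max_comm]

theorem fedexp_descent_general {d : ℕ} (F : EuclideanSpace ℝ (Fin d) → ℝ) (L : ℝ)
    (hdiff : Differentiable ℝ F)
    (hlip : ∀ x y, ‖gradient F x - gradient F y‖ ≤ L * ‖x - y‖)
    (w u : EuclideanSpace ℝ (Fin d)) (hu : u ≠ 0) (γ S : ℝ)
    (η : ℝ) (hη : η = max 1 (S / ‖u‖ ^ 2))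
    (w' : EuclideanSpace ℝ (Fin d)) (hw' : w' = w - (γ * η) • u) :
    F w' - F w ≤ -(γ * η) * (⟪gradient F w, u⟫ - (γ * L / 2) * max S (‖u‖ ^ 2)) := by
  have hη_mul : η * ‖u‖ ^ 2 = max S (‖u‖ ^ 2) := by
    rw [hη, max_one_div_mul (by positivity)]
  have hdescent := image_add_le_of_lipschitz_gradient hdiff hlip w (-((γ * η) • u))
  rw [← sub_eq_add_neg, ← hw', inner_neg_right, real_inner_smul_right, norm_neg, norm_smul,
    Real.norm_eq_abs, mul_pow, sq_abs] at hdescent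
  calc F w' - F w ≤ -((γ * η) * ⟪gradient F w, u⟫) + L / 2 * ((γ * η) ^ 2 * ‖u‖ ^ 2) := by
        linarith
    _ = _ := by rw [← hη_mul]; ring

/-- Per-round descent inequality for the DP-FedEXP adaptive step size: for an `L`-smooth
`F`, with `η = max{1, S/‖u‖²}` and `w' = w - γηu`,
`F(w') - F(w) ≤ -γη (⟨∇F(w), u⟩ - (γL/2) max{S, ‖u‖²})`. -/
theorem fedexp_descent {d : ℕ} (F : EuclideanSpace ℝ (Fin d) → ℝ) (L : ℝ)
    (hdiff : Differentiable ℝ F)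
    (hlip : ∀ x y, ‖gradient F x - gradient F y‖ ≤ L * ‖x - y‖)
    (w u : EuclideanSpace ℝ (Fin d)) (hu : u ≠ 0) (γ S : ℝ) (hγ : 0 < γ) (hS : 0 ≤ S)
    (η : ℝ) (hη : η = max 1 (S / ‖u‖ ^ 2))
    (w' : EuclideanSpace ℝ (Fin d)) (hw' : w' = w - (γ * η) • u) :
    F w' - F w ≤ -(γ * η) * (⟪gradient F w, u⟫ - (γ * L / 2) * max S (‖u‖ ^ 2)) :=
  fedexp_descent_general F L hdiff hlip w u hu γ S η hη w' hw'
end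

section
/- Let H be a real inner product space, let M ≥ 1, let g₁, …, g_M, h₁, …, h_M ∈ H, let ε ∈ H, and set g = (1/M)·Σ_{i=1}^M g_i and h̄ = (1/M)·Σ_{i=1}^M h_i. Then ⟨g, h̄ + ε⟩ ≥ (1/4)·‖g‖² − (1/(2M))·Σ_{i=1}^M ‖g_i − h_i‖² − ‖ε‖². -/
open scoped RealInnerProductSpace
open Finset

/-!
Write `⟪g, h̄ + ε⟫ = ⟪g, h̄⟫ + ⟪g, ε⟫`. Polarization gives `⟪g, h̄⟫ ≥ (‖g‖² - ‖g - h̄‖²) / 2`,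
and `‖g / 2 + ε‖² ≥ 0` gives `⟪g, ε⟫ ≥ -‖g‖² / 4 - ‖ε‖²`. Finally `g - h̄` is the average of
the `gᵢ - hᵢ`, so by the triangle and Cauchy–Schwarz inequalities
`‖g - h̄‖² ≤ (1/M) Σ ‖gᵢ - hᵢ‖²`.
-/

theorem norm_inv_card_smul_sum_sq_le {ι E : Type*} [SeminormedAddCommGroup E] [NormedSpace ℝ E]
    (s : Finset ι) (v : ι → E) :
    ‖(#s : ℝ)⁻¹ • ∑ i ∈ s, v i‖ ^ 2 ≤ (#s : ℝ)⁻¹ * ∑ i ∈ s, ‖v i‖ ^ 2 := by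
  have hsum : ‖∑ i ∈ s, v i‖ ^ 2 ≤ #s * ∑ i ∈ s, ‖v i‖ ^ 2 :=
    (pow_le_pow_left₀ (norm_nonneg _) (norm_sum_le s v) 2).trans (sq_sum_le_card_mul_sum_sq ..)
  calc ‖(#s : ℝ)⁻¹ • ∑ i ∈ s, v i‖ ^ 2 = (#s : ℝ)⁻¹ ^ 2 * ‖∑ i ∈ s, v i‖ ^ 2 := by
        rw [norm_smul, mul_pow, Real.norm_of_nonneg (by positivity)]
    _ ≤ (#s : ℝ)⁻¹ ^ 2 * (#s * ∑ i ∈ s, ‖v i‖ ^ 2) := by gcongr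
    _ = (#s : ℝ)⁻¹ * ∑ i ∈ s, ‖v i‖ ^ 2 := by
        rcases eq_or_ne (#s : ℝ) 0 with h | h <;> field_simp [h]

section InnerProductSpace

variable {F : Type*} [NormedAddCommGroup F] [InnerProductSpace ℝ F]

theorem norm_sq_sub_norm_sub_sq_div_two_le_real_inner (x y : F) :
    (‖x‖ ^ 2 - ‖x - y‖ ^ 2) / 2 ≤ ⟪x, y⟫ := by
  nlinarith [norm_sub_sq_real x y, sq_nonneg ‖y‖]

theorem neg_norm_sq_div_four_sub_norm_sq_le_real_inner (x y : F) :
    -(‖x‖ ^ 2 / 4) - ‖y‖ ^ 2 ≤ ⟪x, y⟫ := by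
  have hexpand := norm_add_sq_real ((1 / 2 : ℝ) • x) y
  rw [inner_smul_left, norm_smul] at hexpand
  norm_num at hexpand
  nlinarith [sq_nonneg ‖(1 / 2 : ℝ) • x + y‖]

theorem norm_sq_div_four_sub_le_real_inner_add (x y z : F) :
    ‖x‖ ^ 2 / 4 - ‖x - y‖ ^ 2 / 2 - ‖z‖ ^ 2 ≤ ⟪x, y + z⟫ := by
  rw [inner_add_right]
  linarith [norm_sq_sub_norm_sub_sq_div_two_le_real_inner x y,
    neg_norm_sq_div_four_sub_norm_sq_le_real_inner x z]

end InnerProductSpace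

theorem alignment_lower_bound_general {H : Type*} [NormedAddCommGroup H] [InnerProductSpace ℝ H]
    (M : ℕ) (g' h : Fin M → H) (ε : H)
    (g : H) (hg : g = (M : ℝ)⁻¹ • ∑ i, g' i)
    (hbar : H) (hhbar : hbar = (M : ℝ)⁻¹ • ∑ i, h i) :
    ⟪g, hbar + ε⟫ ≥
      (1 / 4 : ℝ) * ‖g‖ ^ 2 - (1 / (2 * M) : ℝ) * ∑ i, ‖g' i - h i‖ ^ 2 - ‖ε‖ ^ 2 := by
  have hdiff : g - hbar = (#(univ : Finset (Fin M)) : ℝ)⁻¹ • ∑ i, (g' i - h i) := by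
    rw [hg, hhbar, ← smul_sub, ← sum_sub_distrib, card_univ, Fintype.card_fin]
  have havg := norm_inv_card_smul_sum_sq_le univ (fun i => g' i - h i)
  rw [← hdiff, card_univ, Fintype.card_fin] at havg
  have hcoeff : (1 / (2 * M) : ℝ) = (M : ℝ)⁻¹ / 2 := by ring
  rw [hcoeff]
  linarith [norm_sq_div_four_sub_le_real_inner_add g hbar ε]

/-- Alignment lower bound used in Theorems 4.3 and 4.4: with `g = (1/M) Σ gᵢ` and
`h̄ = (1/M) Σ hᵢ`, one has
`⟨g, h̄ + ε⟩ ≥ (1/4)‖g‖² - (1/(2M)) Σ ‖gᵢ - hᵢ‖² - ‖ε‖²`. -/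
theorem alignment_lower_bound {H : Type*} [NormedAddCommGroup H] [InnerProductSpace ℝ H]
    (M : ℕ) (hM : 1 ≤ M) (g' h : Fin M → H) (ε : H)
    (g : H) (hg : g = (M : ℝ)⁻¹ • ∑ i, g' i)
    (hbar : H) (hhbar : hbar = (M : ℝ)⁻¹ • ∑ i, h i) :
    ⟪g, hbar + ε⟫ ≥
      (1 / 4 : ℝ) * ‖g‖ ^ 2 - (1 / (2 * M) : ℝ) * ∑ i, ‖g' i - h i‖ ^ 2 - ‖ε‖ ^ 2 :=
  alignment_lower_bound_general M g' h ε g hg hbar hhbar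
end
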